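/- arXiv:1612.04032 — 2 statements merged into one kernel-verified Lean document; each statement's English description precedes it below -/
import Mathlib

section
/- Let M = M₁ ⊕ M₂ be an orthogonal decomposition of a real Hilbert space with dim M₂ = q−1 finite. Let e ∈ M₁ with ‖e‖ = 1, let ν > μ > 0, and let B_μ, B_ν be bounded linear invertible operators on M such that ν > μ‖B_ν^{-1}B_μ‖ and such that P∘B_μ^{-1}∘B_ν restricted to M₂ is an invertible operator M₂ → M₂, where P: M → M₂ is the orthogonal projection. Set S = {x ∈ M₁ : ‖x‖ = μ} and Q = {v + te : v ∈ M₂, ‖v‖ ≤ ν, t ∈ [0,ν]}. Then B_ν(∂Q) ∩ B_μ(S) = ∅. -/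
/-!
If `Bν z = Bμ x` with `z = v + t e ∈ ∂Q` and `x ∈ S`, then `‖z‖ ≤ ‖Bν⁻¹ Bμ‖ μ < ν`. Since `v ⊥ e`,
both `‖v‖` and `t` are at most `‖z‖ < ν`, so `z` can only lie on the bottom face `t = 0`, i.e.
`z = v ∈ M₂`. Then `Bμ⁻¹ Bν v = x ∈ M₁ ⊆ M₂ᗮ` has zero projection onto `M₂`, so `v = 0` by
injectivity of `P Bμ⁻¹ Bν` on `M₂`, whence `x = 0`, contradicting `‖x‖ = μ > 0`.
-/

open Submodule

section Normed

variable {𝕜 E : Type*} [NontriviallyNormedField 𝕜] [NormedAddCommGroup E] [NormedSpace 𝕜 E]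

lemma ContinuousLinearEquiv.norm_le_of_apply_eq_apply {A B : E ≃L[𝕜] E} {z x : E}
    (h : A z = B x) : ‖z‖ ≤ ‖(A.symm : E →L[𝕜] E).comp (B : E →L[𝕜] E)‖ * ‖x‖ := by
  have hz : z = ((A.symm : E →L[𝕜] E).comp (B : E →L[𝕜] E)) x := by
    simp [← h]
  rw [hz]
  exact ContinuousLinearMap.le_opNorm _ _

end Normed

section InnerProduct

variable {E : Type*} [NormedAddCommGroup E] [InnerProductSpace ℝ E]

lemma norm_left_le_norm_add_of_real_inner_eq_zero {x y : E} (h : inner ℝ x y = 0) :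
    ‖x‖ ≤ ‖x + y‖ := by
  have := norm_add_sq_eq_norm_sq_add_norm_sq_real h
  nlinarith [norm_nonneg x, norm_nonneg y, norm_nonneg (x + y)]

lemma norm_right_le_norm_add_of_real_inner_eq_zero {x y : E} (h : inner ℝ x y = 0) :
    ‖y‖ ≤ ‖x + y‖ := by
  rw [add_comm]
  exact norm_left_le_norm_add_of_real_inner_eq_zero (by rwa [real_inner_comm])

lemma Submodule.eq_zero_of_orthogonalProjectionOnto_injective {K : Submodule ℝ E}
    [K.HasOrthogonalProjection] {T : E →L[ℝ] E}
    (hT : Function.Injective fun v : K => K.orthogonalProjectionOnto (T v))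
    {v : E} (hv : v ∈ K) (hTv : T v ∈ Kᗮ) : v = 0 := by
  have : (⟨v, hv⟩ : K) = 0 := hT (by simpa using hTv)
  simpa using congrArg Subtype.val this

lemma eq_zero_of_norm_add_smul_lt {K : Submodule ℝ E} {v e : E} (hv : v ∈ Kᗮ) (he : e ∈ K)
    (hnorme : ‖e‖ = 1) {t ν : ℝ} (ht : 0 ≤ t) (hface : t = 0 ∨ t = ν ∨ ‖v‖ = ν)
    (hlt : ‖v + t • e‖ < ν) : t = 0 := by
  have hve : inner ℝ v (t • e) = 0 := inner_left_of_mem_orthogonal (K.smul_mem t he) hv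
  have hv_lt : ‖v‖ < ν := (norm_left_le_norm_add_of_real_inner_eq_zero hve).trans_lt hlt
  have ht_lt : t < ν := by
    have := (norm_right_le_norm_add_of_real_inner_eq_zero hve).trans_lt hlt
    rwa [norm_smul, hnorme, mul_one, Real.norm_of_nonneg ht] at this
  rcases hface with h | h | h
  exacts [h, absurd h ht_lt.ne, absurd h hv_lt.ne]

end InnerProduct

theorem stmt4_general {M : Type*} [NormedAddCommGroup M] [InnerProductSpace ℝ M]
    (M₁ M₂ : Submodule ℝ M) (hperp : M₂ = M₁ᗮ) [FiniteDimensional ℝ M₂]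
    (e : M) (he : e ∈ M₁) (hnorme : ‖e‖ = 1)
    (μ ν : ℝ) (hμ : 0 < μ)
    (Bμ Bν : M ≃L[ℝ] M)
    (hnorm : μ * ‖((Bν.symm : M →L[ℝ] M).comp (Bμ : M →L[ℝ] M))‖ < ν)
    (hinv : Function.Bijective (fun v : M₂ => Submodule.orthogonalProjectionOnto M₂ (Bμ.symm (Bν (v : M)))))
    (S : Set M) (hS : S = {x | x ∈ M₁ ∧ ‖x‖ = μ})
    (bQ : Set M)
    (hbQ : bQ = {z | ∃ v ∈ M₂, ∃ t ∈ Set.Icc (0 : ℝ) ν,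
      ‖v‖ ≤ ν ∧ z = v + t • e ∧ (t = 0 ∨ t = ν ∨ ‖v‖ = ν)}) :
    (Bν '' bQ) ∩ (Bμ '' S) = ∅ := by
  subst hS hbQ
  rw [Set.eq_empty_iff_forall_notMem]
  rintro _ ⟨⟨_, ⟨v, hv, t, ⟨ht, -⟩, -, rfl, hface⟩, rfl⟩, x, ⟨hx, rfl⟩, hBx⟩
  have hz : ‖v + t • e‖ < ν := by
    calc ‖v + t • e‖ ≤ _ * ‖x‖ := ContinuousLinearEquiv.norm_le_of_apply_eq_apply hBx.symm
      _ < ν := by rwa [mul_comm]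
  obtain rfl : t = 0 := eq_zero_of_norm_add_smul_lt (hperp ▸ hv) he hnorme ht hface hz
  rw [zero_smul, add_zero] at hBx
  have hv0 : v = 0 := by
    refine eq_zero_of_orthogonalProjectionOnto_injective (T := (Bν.trans Bμ.symm : M →L[ℝ] M))
      hinv.injective hv ?_
    have : Bμ.symm (Bν v) = x := by simp [← hBx]
    simpa [this, hperp] using le_orthogonal_orthogonal M₁ hx
  have hx0 : x = 0 := by simpa [hv0] using hBx
  simp [hx0] at hμ

/-- disjointness part of the linking lemma: with the stated hypotheses,
`B_ν(∂Q) ∩ B_μ(S) = ∅`. -/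
theorem stmt4 {M : Type*} [NormedAddCommGroup M] [InnerProductSpace ℝ M] [CompleteSpace M]
    (M₁ M₂ : Submodule ℝ M) (hperp : M₂ = M₁ᗮ) [FiniteDimensional ℝ M₂]
    (q : ℕ) (hq : Module.finrank ℝ M₂ = q - 1)
    (e : M) (he : e ∈ M₁) (hnorme : ‖e‖ = 1)
    (μ ν : ℝ) (hμ : 0 < μ) (hμν : μ < ν)
    (Bμ Bν : M ≃L[ℝ] M)
    (hnorm : μ * ‖((Bν.symm : M →L[ℝ] M).comp (Bμ : M →L[ℝ] M))‖ < ν)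
    (hinv : Function.Bijective (fun v : M₂ => Submodule.orthogonalProjectionOnto M₂ (Bμ.symm (Bν (v : M)))))
    (S : Set M) (hS : S = {x | x ∈ M₁ ∧ ‖x‖ = μ})
    (bQ : Set M)
    (hbQ : bQ = {z | ∃ v ∈ M₂, ∃ t ∈ Set.Icc (0 : ℝ) ν,
      ‖v‖ ≤ ν ∧ z = v + t • e ∧ (t = 0 ∨ t = ν ∨ ‖v‖ = ν)}) :
    (Bν '' bQ) ∩ (Bμ '' S) = ∅ :=
  stmt4_general M₁ M₂ hperp e he hnorme μ ν hμ Bμ Bν hnorm hinv S hS bQ hbQ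
end

section
/- Let M = M₁ ⊕ M₂ be an orthogonal decomposition of a real Hilbert space with dim M₂ finite, e ∈ M₁ with ‖e‖ = 1, ν > μ > 0, and B_μ, B_ν bounded linear invertible operators on M with ν > μ‖B_ν^{-1}B_μ‖ and with B₀ := P∘B_μ^{-1}∘B_ν|_{M₂}: M₂ → M₂ invertible (P the orthogonal projection onto M₂). Define ψ₀: [0,ν] × {v ∈ M₂ : ‖v‖ ≤ ν} → ℝ × M₂ by ψ₀(t,v) = (‖B_μ^{-1}B_ν(te+v)‖, P B_μ^{-1}B_ν(te+v)). Then the equation ψ₀(t,v) = (μ, 0) has the unique solution t* = μ‖B_μ^{-1}B_ν e − B_μ^{-1}B_ν B₀^{-1}(P B_μ^{-1}B_ν e)‖^{-1}, v* = −t* B₀^{-1}(P B_μ^{-1}B_ν e), and moreover 0 < t* < ν and ‖v*‖ < ν. -/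
/-! With `A = Bμ⁻¹ Bν`, the projected equation `P (A (t e + v)) = 0` reads `B₀ v = -t P (A e)`,
so `v = -t m` with `m = B₀⁻¹ (P (A e))`; then `A (t e + v) = t A (e - m)` and the norm equation
fixes `t = μ / ‖A (e - m)‖`. Since `m ∈ M₂ ⊥ e`, Pythagoras gives `‖e - m‖ ≥ max 1 ‖m‖`, and
`‖e - m‖ ≤ ‖A⁻¹‖ ‖A (e - m)‖` bounds both `t*` and `‖v*‖ = t* ‖m‖` by `μ ‖A⁻¹‖ < ν`. -/

theorem norm_le_norm_sub_of_real_inner_eq_zero {F : Type*} [NormedAddCommGroup F]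
    [InnerProductSpace ℝ F] {x y : F} (h : inner ℝ x y = 0) :
    ‖x‖ ≤ ‖x - y‖ ∧ ‖y‖ ≤ ‖x - y‖ := by
  have hpyth := norm_sub_sq_eq_norm_sq_add_norm_sq_real h
  constructor <;> nlinarith [norm_nonneg x, norm_nonneg y, norm_nonneg (x - y)]

theorem div_norm_mul_norm_le_mul_opNorm {𝕜 E F : Type*} [NontriviallyNormedField 𝕜]
    [SeminormedAddCommGroup E] [SeminormedAddCommGroup F] [NormedSpace 𝕜 E] [NormedSpace 𝕜 F]
    (K : E →L[𝕜] F) {u : E} {w : F} (hKu : K u = w) {μ : ℝ} (hμ : 0 ≤ μ) :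
    μ / ‖u‖ * ‖w‖ ≤ μ * ‖K‖ := by
  rcases (norm_nonneg u).eq_or_lt with hu | hu
  · rw [← hu, div_zero, zero_mul]
    positivity
  · calc μ / ‖u‖ * ‖w‖ ≤ μ / ‖u‖ * (‖K‖ * ‖u‖) := by
          gcongr
          exact hKu ▸ K.le_opNorm u
      _ = μ * ‖K‖ := by field_simp

theorem apply_smul_add_eq_zero_iff {R M N : Type*} [Ring R] [AddCommGroup M] [Module R M]
    [AddCommGroup N] [Module R N] {p : Submodule R M} (L : M →ₗ[R] N)
    (B₀ : p → N) (B₀inv : N → p) (hB₀ : ∀ v : p, B₀ v = L v)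
    (hli : ∀ v, B₀inv (B₀ v) = v) (hri : ∀ w, B₀ (B₀inv w) = w) (t : R) (e : M) (v : p) :
    L (t • e + v) = 0 ↔ v = -t • B₀inv (L e) := by
  have hB₀smul : B₀ (-t • B₀inv (L e)) = -t • L e := by
    rw [hB₀, Submodule.coe_smul, map_smul, ← hB₀, hri]
  rw [map_add, map_smul, ← hB₀, add_eq_zero_iff_eq_neg', ← neg_smul, ← hB₀smul]
  exact (Function.LeftInverse.injective hli).eq_iff

theorem norm_smul_eq_iff_eq_div {E : Type*} [SeminormedAddCommGroup E] [NormedSpace ℝ E]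
    {u : E} (hu : ‖u‖ ≠ 0) {t : ℝ} (ht : 0 ≤ t) (μ : ℝ) : ‖t • u‖ = μ ↔ t = μ / ‖u‖ := by
  rw [norm_smul, Real.norm_of_nonneg ht, eq_div_iff hu]

theorem stmt5_general {M : Type*} [NormedAddCommGroup M] [InnerProductSpace ℝ M]
    (M₁ M₂ : Submodule ℝ M) (hperp : M₂ = M₁ᗮ) [FiniteDimensional ℝ M₂]
    (e : M) (he : e ∈ M₁) (hnorme : ‖e‖ = 1)
    (μ ν : ℝ) (hμ : 0 < μ)
    (Bμ Bν : M ≃L[ℝ] M)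
    (hnorm : μ * ‖((Bν.symm : M →L[ℝ] M).comp (Bμ : M →L[ℝ] M))‖ < ν)
    (B₀ B₀inv : M₂ → M₂)
    (hB₀ : ∀ v : M₂, B₀ v = M₂.orthogonalProjectionOnto (Bμ.symm (Bν (v : M))))
    (hli : ∀ v, B₀inv (B₀ v) = v) (hri : ∀ v, B₀ (B₀inv v) = v)
    (tstar : ℝ) (vstar : M₂)
    (htstar : tstar = μ / ‖Bμ.symm (Bν e) -
      Bμ.symm (Bν ((B₀inv (M₂.orthogonalProjectionOnto (Bμ.symm (Bν e))) : M₂) : M))‖)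
    (hvstar : vstar = -tstar • B₀inv (M₂.orthogonalProjectionOnto (Bμ.symm (Bν e)))) :
    (0 < tstar ∧ tstar < ν ∧ ‖(vstar : M)‖ < ν) ∧
    ∀ t ∈ Set.Icc (0 : ℝ) ν, ∀ v : M₂, ‖(v : M)‖ ≤ ν →
      ((‖Bμ.symm (Bν (t • e + (v : M)))‖ = μ ∧
        M₂.orthogonalProjectionOnto (Bμ.symm (Bν (t • e + (v : M)))) = 0) ↔
        (t = tstar ∧ v = vstar)) := by
  set A : M ≃L[ℝ] M := Bν.trans Bμ.symm
  set L : M →ₗ[ℝ] M₂ := (M₂.orthogonalProjectionOnto : M →ₗ[ℝ] M₂) ∘ₗ (A : M →ₗ[ℝ] M)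
  set m : M₂ := B₀inv (L e)
  set u : M := A (e - m)
  have htstar : tstar = μ / ‖u‖ := by simp only [htstar, u, map_sub]; rfl
  have hvstar : vstar = -tstar • m := hvstar
  have horth : inner ℝ e (m : M) = 0 := (Submodule.mem_orthogonal _ _).1 (hperp ▸ m.2) e he
  obtain ⟨he_le, hm_le⟩ := norm_le_norm_sub_of_real_inner_eq_zero horth
  rw [hnorme] at he_le
  have hbound : tstar * ‖e - m‖ < ν :=
    (htstar ▸ div_norm_mul_norm_le_mul_opNorm _ (A.symm_apply_apply _) hμ.le).trans_lt hnorm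
  have hu : 0 < ‖u‖ := norm_pos_iff.2 <| A.map_ne_zero_iff.2 <|
    norm_pos_iff.1 (zero_lt_one.trans_le he_le)
  have htpos : 0 < tstar := htstar ▸ div_pos hμ hu
  have hA_line : ∀ t : ℝ, A (t • e + ((-t • m : M₂) : M)) = t • u := by
    intro t
    rw [neg_smul, Submodule.coe_neg, Submodule.coe_smul, ← sub_eq_add_neg, ← smul_sub, map_smul]
  refine ⟨⟨htpos, (le_mul_of_one_le_right htpos.le he_le).trans_lt hbound, ?_⟩, ?_⟩
  · rw [hvstar, Submodule.coe_smul, norm_smul, norm_neg, Real.norm_of_nonneg htpos.le]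
    exact (mul_le_mul_of_nonneg_left hm_le htpos.le).trans_lt hbound
  · rintro t ⟨ht, -⟩ v -
    change ‖A (t • e + v)‖ = μ ∧ L (t • e + v) = 0 ↔ _
    rw [apply_smul_add_eq_zero_iff L B₀ B₀inv hB₀ hli hri, hvstar]
    constructor
    · rintro ⟨hn, rfl⟩
      obtain rfl := (norm_smul_eq_iff_eq_div hu.ne' ht μ).1 (hA_line t ▸ hn)
      exact ⟨htstar.symm, htstar ▸ rfl⟩
    · rintro ⟨rfl, rfl⟩
      exact ⟨(hA_line _).symm ▸ (norm_smul_eq_iff_eq_div hu.ne' ht μ).2 htstar, rfl⟩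

/-- explicit unique solution of `ψ₀(t,v) = (μ,0)` in the linking lemma. -/
theorem stmt5 {M : Type*} [NormedAddCommGroup M] [InnerProductSpace ℝ M] [CompleteSpace M]
    (M₁ M₂ : Submodule ℝ M) (hperp : M₂ = M₁ᗮ) [FiniteDimensional ℝ M₂]
    (e : M) (he : e ∈ M₁) (hnorme : ‖e‖ = 1)
    (μ ν : ℝ) (hμ : 0 < μ) (hμν : μ < ν)
    (Bμ Bν : M ≃L[ℝ] M)
    (hnorm : μ * ‖((Bν.symm : M →L[ℝ] M).comp (Bμ : M →L[ℝ] M))‖ < ν)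
    (B₀ B₀inv : M₂ → M₂)
    (hB₀ : ∀ v : M₂, B₀ v = M₂.orthogonalProjectionOnto (Bμ.symm (Bν (v : M))))
    (hli : ∀ v, B₀inv (B₀ v) = v) (hri : ∀ v, B₀ (B₀inv v) = v)
    (tstar : ℝ) (vstar : M₂)
    (htstar : tstar = μ / ‖Bμ.symm (Bν e) -
      Bμ.symm (Bν ((B₀inv (M₂.orthogonalProjectionOnto (Bμ.symm (Bν e))) : M₂) : M))‖)
    (hvstar : vstar = -tstar • B₀inv (M₂.orthogonalProjectionOnto (Bμ.symm (Bν e)))) :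
    (0 < tstar ∧ tstar < ν ∧ ‖(vstar : M)‖ < ν) ∧
    ∀ t ∈ Set.Icc (0 : ℝ) ν, ∀ v : M₂, ‖(v : M)‖ ≤ ν →
      ((‖Bμ.symm (Bν (t • e + (v : M)))‖ = μ ∧
        M₂.orthogonalProjectionOnto (Bμ.symm (Bν (t • e + (v : M)))) = 0) ↔
        (t = tstar ∧ v = vstar)) :=
  stmt5_general M₁ M₂ hperp e he hnorme μ ν hμ Bμ Bν hnorm B₀ B₀inv hB₀ hli hri tstar vstar htstar
    hvstar
end
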